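/- arXiv:2102.06853 — 5 statements merged into one kernel-verified Lean document; each statement's English description precedes it below -/
import Mathlib

section
/- For variables $x_1,\dots,x_N$ and integers $n_1,\dots,n_N$, the following identity of rational functions holds: $\prod_{l=2}^N \frac{t^{n_l} x_1 - t^{n_1} x_l}{x_1 - x_l} = t^{\sum_i n_i}\Big( t^{-n_1}\prod_{l=2}^N \frac{x_1 - t^{n_1} x_l}{x_1 - x_l} + \sum_{j=2}^N t^{-n_j}\frac{(t^{n_j}-1)x_j}{x_1 - x_j} \prod_{l=2, l\neq j}^N \frac{x_j - t^{n_j} x_l}{t^{n_l} x_j - t^{n_j} x_l}\cdot\frac{t^{n_l} x_1 - t^{n_1} x_l}{x_1 - x_l}\Big)$. -/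
/-!
Put `y l = x l / t ^ n l` and `z = x 1 / t ^ n 1`. After pulling out the common weight
`∏ l, t ^ n 1 * t ^ n l / (x 1 - x l)`, the left side becomes `∏ l, (z - y l)`, the first term on
the right `∏ l, (z - x l)`, and the `j`-th summand `-(∏ l, (y j - x l)) * ℓ_j z`, where `ℓ_j` is the
Lagrange basis polynomial at the nodes `y l` (distinct by `hden`). The identity is therefore the
Lagrange interpolation formula for `∏ l, (X - x l) - ∏ l, (X - y l)`, a polynomial of degree less
than the number of nodes.
-/

open Finset Polynomial

theorem zpow_sum₀ {G₀ ι : Type*} [CommGroupWithZero G₀] {a : G₀} (ha : a ≠ 0) (s : Finset ι)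
    (f : ι → ℤ) : a ^ (∑ i ∈ s, f i) = ∏ i ∈ s, a ^ f i := by
  induction s using Finset.cons_induction with
  | empty => simp
  | cons i s hi ih => rw [sum_cons, prod_cons, zpow_add₀ ha, ih]

theorem Lagrange.prod_sub_sub_prod_sub_eq_sum {K ι : Type*} [Field K] [DecidableEq ι]
    {s : Finset ι} {y : ι → K} (hy : Set.InjOn y s) (b : ι → K) (z : K) :
    ∏ l ∈ s, (z - b l) - ∏ l ∈ s, (z - y l) =
      ∑ j ∈ s, (∏ l ∈ s, (y j - b l)) * ∏ l ∈ s.erase j, (z - y l) / (y j - y l) := by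
  set p := nodal s b - nodal s y
  have hdeg : p.degree < #s := by
    rw [← degree_nodal (v := b)]
    exact degree_sub_lt_left (by rw [degree_nodal, degree_nodal]) nodal_ne_zero
      (by rw [nodal_monic.leadingCoeff, nodal_monic.leadingCoeff])
  have hnode : ∀ j ∈ s, p.eval (y j) = ∏ l ∈ s, (y j - b l) := fun j hj => by
    rw [eval_sub, eval_nodal_at_node hj, sub_zero, eval_nodal]
  calc ∏ l ∈ s, (z - b l) - ∏ l ∈ s, (z - y l) = p.eval z := by
        rw [eval_sub, eval_nodal, eval_nodal]
    _ = (interpolate s y fun j => ∏ l ∈ s, (y j - b l)).eval z := by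
        rw [← eq_interpolate_of_eval_eq _ hy hdeg hnode]
    _ = _ := by
        simp only [interpolate_apply, eval_finsetSum, eval_mul, eval_C, Lagrange.basis, eval_prod,
          basisDivisor, eval_X, eval_sub, inv_mul_eq_div]

theorem div_sub_div_ne_zero {K : Type*} [Field K] {a b c d : K} (hb : b ≠ 0) (hd : d ≠ 0)
    (h : d * a - b * c ≠ 0) : a / b - c / d ≠ 0 := by
  rw [div_sub_div _ _ hb hd, mul_comm a]
  exact div_ne_zero h (mul_ne_zero hb hd)

section DellIdentity

variable {K ι : Type*} [Field K] [DecidableEq ι] {s : Finset ι} {a c : K} {T x : ι → K}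

theorem dell_summand_eq (hc : c ≠ 0) (hT : ∀ l ∈ s, T l ≠ 0) (hx : ∀ l ∈ s, a - x l ≠ 0)
    (hden : ∀ j ∈ s, ∀ l ∈ s, j ≠ l → T l * x j - T j * x l ≠ 0) {j : ι} (hj : j ∈ s) :
    c * (∏ l ∈ s, T l) * ((T j)⁻¹ * ((T j - 1) * x j / (a - x j)) *
      ∏ l ∈ s.erase j, ((x j - T j * x l) / (T l * x j - T j * x l)) *
        ((T l * a - c * x l) / (a - x l))) =
      -((∏ l ∈ s, c * T l / (a - x l)) * ((∏ l ∈ s, (x j / T j - x l)) *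
        ∏ l ∈ s.erase j, (a / c - x l / T l) / (x j / T j - x l / T l))) := by
  have hTj := hT j hj
  have hfactor : ∏ l ∈ s.erase j, T l * (((x j - T j * x l) / (T l * x j - T j * x l)) *
      ((T l * a - c * x l) / (a - x l))) =
      ∏ l ∈ s.erase j, c * T l / (a - x l) *
        ((x j / T j - x l) * ((a / c - x l / T l) / (x j / T j - x l / T l))) := by
    refine prod_congr rfl fun l hl => ?_
    have hls := mem_of_mem_erase hl
    have hTl := hT l hls
    have := hx l hls
    have hjl := hden j hj l hls (ne_of_mem_erase hl).symm
    have := div_sub_div_ne_zero hTj hTl hjl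
    field_simp
  have hscalar : c * ((T j - 1) * x j / (a - x j)) = -(c * T j / (a - x j) * (x j / T j - x j)) := by
    have := hx j hj
    field_simp
    ring
  calc _ = c * ((T j - 1) * x j / (a - x j)) * ∏ l ∈ s.erase j, T l *
        (((x j - T j * x l) / (T l * x j - T j * x l)) * ((T l * a - c * x l) / (a - x l))) := by
        rw [← mul_prod_erase s T hj, prod_mul_distrib (f := T)]
        linear_combination (c * ((T j - 1) * x j / (a - x j)) * (∏ l ∈ s.erase j, T l) *
          ∏ l ∈ s.erase j, ((x j - T j * x l) / (T l * x j - T j * x l)) *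
            ((T l * a - c * x l) / (a - x l))) * mul_inv_cancel₀ hTj
    _ = _ := by
        rw [hfactor, hscalar, ← mul_prod_erase s (fun l => c * T l / (a - x l)) hj,
          ← mul_prod_erase s (fun l => x j / T j - x l) hj, prod_mul_distrib, prod_mul_distrib]
        ring

theorem dell_identity (hc : c ≠ 0) (hT : ∀ l ∈ s, T l ≠ 0) (hx : ∀ l ∈ s, a - x l ≠ 0)
    (hden : ∀ j ∈ s, ∀ l ∈ s, j ≠ l → T l * x j - T j * x l ≠ 0) :
    ∏ l ∈ s, (T l * a - c * x l) / (a - x l) =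
      c * (∏ l ∈ s, T l) *
        (c⁻¹ * ∏ l ∈ s, (a - c * x l) / (a - x l) +
          ∑ j ∈ s, (T j)⁻¹ * ((T j - 1) * x j / (a - x j)) *
            ∏ l ∈ s.erase j, ((x j - T j * x l) / (T l * x j - T j * x l)) *
              ((T l * a - c * x l) / (a - x l))) := by
  have hy : Set.InjOn (fun l => x l / T l) s := fun j hj l hl hjl => by
    by_contra hne
    exact div_sub_div_ne_zero (hT j hj) (hT l hl) (hden j hj l hl hne)
      (sub_eq_zero.2 hjl)
  have hlhs : ∏ l ∈ s, (T l * a - c * x l) / (a - x l) =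
      (∏ l ∈ s, c * T l / (a - x l)) * ∏ l ∈ s, (a / c - x l / T l) := by
    rw [← prod_mul_distrib]
    refine prod_congr rfl fun l hl => ?_
    have := hT l hl
    have := hx l hl
    field_simp
  have hfirst : c * (∏ l ∈ s, T l) * (c⁻¹ * ∏ l ∈ s, (a - c * x l) / (a - x l)) =
      (∏ l ∈ s, c * T l / (a - x l)) * ∏ l ∈ s, (a / c - x l) := by
    rw [mul_comm c, mul_assoc, mul_inv_cancel_left₀ hc, ← prod_mul_distrib, ← prod_mul_distrib]
    refine prod_congr rfl fun l hl => ?_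
    have := hT l hl
    have := hx l hl
    field_simp
  rw [hlhs, mul_add, hfirst, mul_sum, sum_congr rfl fun j hj => dell_summand_eq hc hT hx hden hj,
    sum_neg_distrib, ← mul_sum, ← Lagrange.prod_sub_sub_prod_sub_eq_sum hy]
  ring

end DellIdentity

/-- the rational-function identity (C.1)/(3.37) from the paper. -/
theorem dell_identity_x37 {K : Type*} [Field K] (t : K) (ht : t ≠ 0)
    (N : ℕ) (hN : 2 ≤ N) (x : ℕ → K) (n : ℕ → ℤ)
    (hx : ∀ l ∈ Finset.Icc 2 N, x 1 - x l ≠ 0)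
    (hden : ∀ j ∈ Finset.Icc 2 N, ∀ l ∈ Finset.Icc 2 N, j ≠ l →
      t ^ (n l) * x j - t ^ (n j) * x l ≠ 0) :
    ∏ l ∈ Finset.Icc 2 N, (t ^ (n l) * x 1 - t ^ (n 1) * x l) / (x 1 - x l)
      = t ^ (∑ i ∈ Finset.Icc 1 N, n i) *
        (t ^ (-(n 1)) * ∏ l ∈ Finset.Icc 2 N, (x 1 - t ^ (n 1) * x l) / (x 1 - x l)
          + ∑ j ∈ Finset.Icc 2 N, t ^ (-(n j)) * ((t ^ (n j) - 1) * x j / (x 1 - x j)) *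
              ∏ l ∈ (Finset.Icc 2 N).erase j,
                ((x j - t ^ (n j) * x l) / (t ^ (n l) * x j - t ^ (n j) * x l)) *
                  ((t ^ (n l) * x 1 - t ^ (n 1) * x l) / (x 1 - x l))) := by
  have hsum : t ^ (∑ i ∈ Icc 1 N, n i) = t ^ n 1 * ∏ l ∈ Icc 2 N, t ^ n l := by
    rw [Icc_eq_cons_Ioc (by omega), sum_cons, zpow_add₀ ht, ← Icc_add_one_left_eq_Ioc,
      zpow_sum₀ ht]
    rfl
  simp only [hsum, zpow_neg]
  exact dell_identity (zpow_ne_zero _ ht) (fun l _ => zpow_ne_zero _ ht) hx hden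
end

section
/- For pairwise distinct nonzero $x_2,\dots,x_N$ and integers $n_2,\dots,n_N$ with $t^{-n_j}x_j$ pairwise distinct, $\prod_{l=2}^N t^{n_l} - 1 = \sum_{j=2}^N (t^{n_j}-1)\prod_{l=2, l\neq j}^N \frac{t^{-n_j}x_j - x_l}{t^{-n_j}x_j - t^{-n_l}x_l}$. -/
open Polynomial Finset

theorem aux_partial_frac {K : Type*} [Field K] (S : Finset ℕ) (hS : S.Nonempty)
    (x y : ℕ → K) (hy : ∀ l ∈ S, y l ≠ 0) (hinj : Set.InjOn y S) :
    (∏ l ∈ S, x l / y l) - 1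
      = ∑ j ∈ S, (x j / y j - 1) * ∏ l ∈ S.erase j, (y j - x l) / (y j - y l) := by
  classical
  set P : K[X] := ∏ l ∈ S, (X - C (x l)) with hP
  set Q : K[X] := ∏ l ∈ S, (X - C (y l)) with hQ
  have hPm : P.Monic := monic_prod_of_monic _ _ fun l _ => monic_X_sub_C _
  have hQm : Q.Monic := monic_prod_of_monic _ _ fun l _ => monic_X_sub_C _
  have hPdeg : P.degree = (S.card : WithBot ℕ) := by
    rw [degree_eq_natDegree hPm.ne_zero, hP, natDegree_prod_of_monic _ _ fun l _ => monic_X_sub_C _]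
    simp
  have hQdeg : Q.degree = (S.card : WithBot ℕ) := by
    rw [degree_eq_natDegree hQm.ne_zero, hQ, natDegree_prod_of_monic _ _ fun l _ => monic_X_sub_C _]
    simp
  have hdeg : (P - Q).degree < (S.card : WithBot ℕ) := by
    rcases eq_or_ne P Q with h | h
    · rw [h, sub_self, degree_zero]; exact WithBot.bot_lt_coe _
    · have := degree_sub_lt (hPdeg.trans hQdeg.symm) hPm.ne_zero
        (by rw [hPm.leadingCoeff, hQm.leadingCoeff])
      rwa [hPdeg] at this
  have key := Lagrange.eq_interpolate hinj hdeg
  -- evaluate at 0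
  have hQy : ∀ j ∈ S, Q.eval (y j) = 0 := fun j hj => by
    rw [hQ, eval_prod]
    exact prod_eq_zero hj (by simp)
  have hE := congrArg (Polynomial.eval 0) key
  rw [Lagrange.interpolate_apply, eval_finset_sum] at hE
  simp only [eval_mul, eval_C] at hE
  -- compute both sides of hE
  have hEL : (P - Q).eval 0 = (∏ l ∈ S, (-x l)) - ∏ l ∈ S, (-y l) := by
    simp [hP, hQ, eval_prod]
  have hEval : ∀ j ∈ S, (P - Q).eval (y j) = ∏ l ∈ S, (y j - x l) := fun j hj => by
    rw [eval_sub, hQy j hj, sub_zero, hP, eval_prod]; simp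
  have hBasis : ∀ j ∈ S, (Lagrange.basis S y j).eval 0
      = ∏ l ∈ S.erase j, ((y j - y l)⁻¹ * (-(y l))) := fun j hj => by
    rw [Lagrange.basis, eval_prod]
    refine prod_congr rfl fun l hl => ?_
    rw [Lagrange.basisDivisor]
    simp
  have hE2 : (∏ l ∈ S, (-x l)) - ∏ l ∈ S, (-y l)
      = ∑ j ∈ S, (∏ l ∈ S, (y j - x l)) * ∏ l ∈ S.erase j, ((y j - y l)⁻¹ * (-(y l))) := by
    rw [← hEL]
    rw [hE]
    exact sum_congr rfl fun j hj => by rw [hEval j hj, hBasis j hj]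
  -- now divide by ∏ (-y l)
  have hyprod : (∏ l ∈ S, (-y l)) ≠ 0 :=
    prod_ne_zero_iff.mpr fun l hl => neg_ne_zero.mpr (hy l hl)
  apply mul_right_cancel₀ hyprod
  rw [sub_mul, one_mul, ← prod_mul_distrib, sum_mul]
  calc (∏ l ∈ S, (x l / y l * -y l)) - ∏ l ∈ S, (-y l)
      = (∏ l ∈ S, (-x l)) - ∏ l ∈ S, (-y l) := by
        congr 1
        exact prod_congr rfl fun l hl => by field_simp [hy l hl]
    _ = ∑ j ∈ S, (∏ l ∈ S, (y j - x l)) * ∏ l ∈ S.erase j, ((y j - y l)⁻¹ * (-(y l))) := hE2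
    _ = ∑ j ∈ S, ((x j / y j - 1) * ∏ l ∈ S.erase j, (y j - x l) / (y j - y l)) *
          ∏ l ∈ S, (-y l) := by
        refine sum_congr rfl fun j hj => ?_
        rw [← Finset.mul_prod_erase S (fun l => y j - x l) hj,
            ← Finset.mul_prod_erase S (fun l => -y l) hj]
        have h1 : (x j / y j - 1) * -y j = y j - x j := by
          field_simp [hy j hj]; ring
        rw [mul_mul_mul_comm, h1, ← prod_mul_distrib, mul_assoc, ← prod_mul_distrib]
        congr 1
        exact prod_congr rfl fun l hl => by rw [div_eq_mul_inv]; ring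



/-- the residue identity (C.13) of the paper:
`∏_{l=2}^N t^{n_l} - 1 = ∑_{j=2}^N (t^{n_j}-1) ∏_{l≠j} (t^{-n_j}x_j - x_l)/(t^{-n_j}x_j - t^{-n_l}x_l)`. -/
theorem dell_identity_res {K : Type*} [Field K] (t : K) (ht : t ≠ 0)
    (N : ℕ) (hN : 2 ≤ N) (x : ℕ → K) (n : ℕ → ℤ)
    (hx0 : ∀ l ∈ Finset.Icc 2 N, x l ≠ 0)
    (hd1 : ∀ j ∈ Finset.Icc 2 N, ∀ l ∈ Finset.Icc 2 N, j ≠ l →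
      t ^ (-(n j)) * x j - x l ≠ 0)
    (hd2 : ∀ j ∈ Finset.Icc 2 N, ∀ l ∈ Finset.Icc 2 N, j ≠ l →
      t ^ (-(n j)) * x j - t ^ (-(n l)) * x l ≠ 0) :
    (∏ l ∈ Finset.Icc 2 N, t ^ (n l)) - 1
      = ∑ j ∈ Finset.Icc 2 N, (t ^ (n j) - 1) *
          ∏ l ∈ (Finset.Icc 2 N).erase j,
            (t ^ (-(n j)) * x j - x l) / (t ^ (-(n j)) * x j - t ^ (-(n l)) * x l) := by
  classical
  set S := Finset.Icc 2 N with hS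
  set y : ℕ → K := fun l => t ^ (-(n l)) * x l with hy'
  have hy : ∀ l ∈ S, y l ≠ 0 := fun l hl => mul_ne_zero (zpow_ne_zero _ ht) (hx0 l hl)
  have hinj : Set.InjOn y S := fun a ha b hb hab => by
    by_contra h
    exact hd2 a ha b hb h (by rw [sub_eq_zero]; exact hab)
  have hSne : S.Nonempty := ⟨2, by simp [hS]; omega⟩
  have key := aux_partial_frac S hSne x y hy hinj
  have hq : ∀ l ∈ S, x l / y l = t ^ (n l) := fun l hl => by
    show x l / (t ^ (-(n l)) * x l) = t ^ (n l)
    rw [mul_comm, ← div_div, div_self (hx0 l hl), one_div, ← zpow_neg, neg_neg]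
  rw [Finset.prod_congr rfl hq] at key
  rw [key]
  exact Finset.sum_congr rfl fun j hj => by rw [hq j hj]
end

section
/- The rational function identity $\frac{1}{1-u t^n x_1}\prod_{i=1}^N \frac{1 - u t^n x_i}{1 - u x_i} = \frac{1}{1-u x_1}\prod_{l=2}^N \frac{x_1 - t^n x_l}{x_1 - x_l} + \sum_{j=2}^N \frac{(t^n - 1)x_j}{(1 - u x_j)(x_1 - x_j)}\prod_{l=2, l\neq j}^N \frac{x_j - t^n x_l}{x_j - x_l}$ holds in the variable $u$. -/
/-!
Write `c = t ^ m` and `y = (x₂, …, x_N)`. Since `∏ (z - c yₗ) - ∏ (z - yₗ)` has degree `< #y`,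
it equals its Lagrange interpolant on the nodes `yⱼ`, which gives the partial-fraction expansion
`∏ (z - c yₗ)/(z - yₗ) = 1 + ∑ⱼ (1 - c) yⱼ/(z - yⱼ) ∏_{l ≠ j} (yⱼ - c yₗ)/(yⱼ - yₗ)`.
Apply it at `z = u⁻¹` (the left side) and at `z = x₁` (the first term on the right); the two
expansions differ by the simple-fraction splitting of `u / ((1 - u x₁)(1 - u yⱼ))`.
-/

open Finset Polynomial Lagrange

section PartialFractions

variable {K ι : Type*} [Field K] [DecidableEq ι] {s : Finset ι} {y : ι → K}

theorem prod_sub_mul_div_sub_eq_one_add_sum (hy : Set.InjOn y s) (c : K) {z : K}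
    (hz : ∀ i ∈ s, z ≠ y i) :
    ∏ i ∈ s, (z - c * y i) / (z - y i) =
      1 + ∑ j ∈ s, (1 - c) * y j / (z - y j) *
        ∏ l ∈ s.erase j, (y j - c * y l) / (y j - y l) := by
  set f := nodal s (fun i => c * y i) - nodal s y
  have hdeg : f.degree < #s := by
    rw [← degree_nodal (v := fun i => c * y i)]
    exact degree_sub_lt_left (by rw [degree_nodal, degree_nodal]) nodal_ne_zero
      (by rw [nodal_monic.leadingCoeff, nodal_monic.leadingCoeff])
  have hf := congrArg (eval z) (eq_interpolate hy hdeg)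
  rw [eval_interpolate_not_at_node _ hz] at hf
  have hterm : ∀ j ∈ s, nodalWeight s y j * (z - y j)⁻¹ * eval (y j) f =
      (1 - c) * y j / (z - y j) * ∏ l ∈ s.erase j, (y j - c * y l) / (y j - y l) := by
    intro j hj
    rw [eval_sub, eval_nodal, eval_nodal_at_node hj, sub_zero, ← mul_prod_erase s _ hj,
      nodalWeight, prod_div_distrib, prod_inv_distrib]
    ring
  rw [sum_congr rfl hterm, eval_sub, eval_nodal, eval_nodal] at hf
  have hden : ∏ i ∈ s, (z - y i) ≠ 0 := prod_ne_zero_iff.2 fun i hi => sub_ne_zero.2 (hz i hi)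
  rw [prod_div_distrib, div_eq_iff hden]
  linear_combination hf

theorem prod_one_sub_mul_div_one_sub_eq_one_add_sum (hy : Set.InjOn y s) (c : K) {u : K}
    (hu : ∀ i ∈ s, 1 - u * y i ≠ 0) :
    ∏ i ∈ s, (1 - u * c * y i) / (1 - u * y i) =
      1 + ∑ j ∈ s, (1 - c) * (u * y j) / (1 - u * y j) *
        ∏ l ∈ s.erase j, (y j - c * y l) / (y j - y l) := by
  rcases eq_or_ne u 0 with rfl | hu0
  · simp
  have hscale : ∀ w, 1 - u * w = u * (u⁻¹ - w) := fun w => by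
    rw [mul_sub, mul_inv_cancel₀ hu0]
  have hfactor : ∀ w, (1 - u * c * w) / (1 - u * w) = (u⁻¹ - c * w) / (u⁻¹ - w) := fun w => by
    rw [mul_assoc, hscale, hscale, mul_div_mul_left _ _ hu0]
  have hcoeff : ∀ w, (1 - c) * (u * w) / (1 - u * w) = (1 - c) * w / (u⁻¹ - w) := fun w => by
    rw [hscale, mul_left_comm, mul_div_mul_left _ _ hu0]
  simp only [hfactor, hcoeff]
  exact prod_sub_mul_div_sub_eq_one_add_sum hy c fun i hi h =>
    hu i hi (by rw [hscale, h, sub_self, mul_zero])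

end PartialFractions

theorem dell_identity_Wn_general {K : Type*} [Field K] (t : K)
    (m : ℤ) (N : ℕ) (hN : 1 ≤ N) (x : ℕ → K) (u : K)
    (hdist : ∀ i ∈ Finset.Icc 1 N, ∀ j ∈ Finset.Icc 1 N, i ≠ j → x i ≠ x j)
    (hu : ∀ i ∈ Finset.Icc 1 N, 1 - u * x i ≠ 0)
    (hu1 : 1 - u * t ^ m * x 1 ≠ 0) :
    (1 / (1 - u * t ^ m * x 1)) *
        ∏ i ∈ Finset.Icc 1 N, (1 - u * t ^ m * x i) / (1 - u * x i)
      = (1 / (1 - u * x 1)) *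
          ∏ l ∈ Finset.Icc 2 N, (x 1 - t ^ m * x l) / (x 1 - x l)
        + ∑ j ∈ Finset.Icc 2 N,
            ((t ^ m - 1) * x j) / ((1 - u * x j) * (x 1 - x j)) *
              ∏ l ∈ (Finset.Icc 2 N).erase j, (x j - t ^ m * x l) / (x j - x l) := by
  have h1 : 1 ∈ Icc 1 N := mem_Icc.2 ⟨le_rfl, hN⟩
  have hsub : Icc 2 N ⊆ Icc 1 N := Icc_subset_Icc_left (by norm_num)
  have hinj : Set.InjOn x (Icc 2 N) := fun i hi j hj =>
    not_imp_not.1 (hdist i (hsub hi) j (hsub hj))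
  have hx1 : ∀ j ∈ Icc 2 N, x 1 ≠ x j := fun j hj =>
    hdist 1 h1 j (hsub hj) (by have := (mem_Icc.1 hj).1; omega)
  rw [← insert_Icc_add_one_left_eq_Icc hN, prod_insert (by simp), ← mul_assoc,
    one_div_mul_eq_div, div_div_cancel_left' hu1, ← one_div, show 1 + 1 = 2 from rfl,
    prod_one_sub_mul_div_one_sub_eq_one_add_sum hinj _ fun j hj => hu j (hsub hj),
    prod_sub_mul_div_sub_eq_one_add_sum hinj _ hx1, mul_add, mul_add, add_assoc, mul_sum,
    mul_sum, ← sum_add_distrib]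
  congr 1
  refine sum_congr rfl fun j hj => ?_
  have h1x1 := hu 1 h1
  have h1xj := hu j (hsub hj)
  have hx1xj := sub_ne_zero.2 (hx1 j hj)
  field_simp
  ring

/-- the rational-function identity in `u` used in Theorem 5.1 of the paper. -/
theorem dell_identity_Wn {K : Type*} [Field K] (t : K) (ht : t ≠ 0)
    (m : ℤ) (N : ℕ) (hN : 1 ≤ N) (x : ℕ → K) (u : K)
    (hdist : ∀ i ∈ Finset.Icc 1 N, ∀ j ∈ Finset.Icc 1 N, i ≠ j → x i ≠ x j)
    (hu : ∀ i ∈ Finset.Icc 1 N, 1 - u * x i ≠ 0)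
    (hu1 : 1 - u * t ^ m * x 1 ≠ 0) :
    (1 / (1 - u * t ^ m * x 1)) *
        ∏ i ∈ Finset.Icc 1 N, (1 - u * t ^ m * x i) / (1 - u * x i)
      = (1 / (1 - u * x 1)) *
          ∏ l ∈ Finset.Icc 2 N, (x 1 - t ^ m * x l) / (x 1 - x l)
        + ∑ j ∈ Finset.Icc 2 N,
            ((t ^ m - 1) * x j) / ((1 - u * x j) * (x 1 - x j)) *
              ∏ l ∈ (Finset.Icc 2 N).erase j, (x j - t ^ m * x l) / (x j - x l) :=
  dell_identity_Wn_general t m N hN x u hdist hu hu1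
end

section
/- The rational function identity $t^{nN} - \prod_{i=1}^N \frac{1 - u t^n x_i}{1 - u x_i} = \sum_{i=1}^N \frac{t^n - 1}{1 - u x_i}\prod_{l=1, l\neq i}^N \frac{x_i - t^n x_l}{x_i - x_l}$ holds in the variable $u$. -/
open Finset

theorem dell_aux {K : Type*} [Field K] (a : K) (x : ℕ → K) :
    ∀ S : Finset ℕ, Set.InjOn x ↑S → ∀ u : K, (∀ i ∈ S, 1 - u * x i ≠ 0) →
    a ^ S.card - ∏ i ∈ S, (1 - u * a * x i) / (1 - u * x i)
      = ∑ i ∈ S, (a - 1) / (1 - u * x i) * ∏ l ∈ S.erase i, (x i - a * x l) / (x i - x l) := by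
  intro S
  induction S using Finset.induction with
  | empty => simp
  | @insert k s hk ih =>
    intro hinj u hu
    have hks : ∀ i ∈ s, x i ≠ x k := by
      intro i hi hxi
      have : i = k := hinj (by simp [hi]) (by simp) hxi
      exact hk (this ▸ hi)
    have hinj' : Set.InjOn x ↑s := hinj.mono (by intro y hy; simp at hy ⊢; tauto)
    have hu' : ∀ i ∈ s, 1 - u * x i ≠ 0 := fun i hi => hu i (by simp [hi])
    have hdk : 1 - u * x k ≠ 0 := hu k (by simp)
    have IH1 := ih hinj' u hu'
    -- the key sum identity at u = 1/x k
    have hsum : ∑ i ∈ s, ((a - 1) * x k / (x k - x i)) *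
          ∏ l ∈ s.erase i, (x i - a * x l) / (x i - x l)
        = a ^ s.card - ∏ l ∈ s, (x k - a * x l) / (x k - x l) := by
      by_cases hxk : x k = 0
      · have hR : ∏ l ∈ s, (x k - a * x l) / (x k - x l) = a ^ s.card := by
          rw [← Finset.prod_const a]
          refine Finset.prod_congr rfl fun l hl => ?_
          have hl0 : x l ≠ 0 := fun h => hks l hl (h.trans hxk.symm)
          rw [hxk]
          rw [zero_sub, zero_sub, neg_div_neg_eq, mul_div_assoc, div_self hl0, mul_one]
        rw [hR, sub_self]
        refine Finset.sum_eq_zero fun i hi => ?_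
        rw [hxk, mul_zero, zero_div, zero_mul]
      · have hu2 : ∀ i ∈ s, 1 - (x k)⁻¹ * x i ≠ 0 := by
          intro i hi h
          apply hks i hi
          have h1 : (x k)⁻¹ * x i = 1 := by linear_combination -h
          field_simp at h1
          exact h1
        have IH2 := ih hinj' (x k)⁻¹ hu2
        have eL : ∑ i ∈ s, (a - 1) / (1 - (x k)⁻¹ * x i) *
              ∏ l ∈ s.erase i, (x i - a * x l) / (x i - x l)
            = ∑ i ∈ s, ((a - 1) * x k / (x k - x i)) *
              ∏ l ∈ s.erase i, (x i - a * x l) / (x i - x l) := by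
          refine Finset.sum_congr rfl fun i hi => ?_
          have h1 : x k - x i ≠ 0 := sub_ne_zero.mpr fun h => hks i hi h.symm
          have h2 : 1 - (x k)⁻¹ * x i ≠ 0 := hu2 i hi
          congr 1
          field_simp
        have eP : ∏ l ∈ s, (1 - (x k)⁻¹ * a * x l) / (1 - (x k)⁻¹ * x l)
            = ∏ l ∈ s, (x k - a * x l) / (x k - x l) := by
          refine Finset.prod_congr rfl fun l hl => ?_
          have h1 : x k - x l ≠ 0 := sub_ne_zero.mpr fun h => hks l hl h.symm
          have h2 : 1 - (x k)⁻¹ * x l ≠ 0 := hu2 l hl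
          field_simp
        rw [eL, eP] at IH2
        exact IH2.symm
    -- expand insert
    rw [Finset.prod_insert hk, Finset.sum_insert hk, Finset.card_insert_of_notMem hk,
      Finset.erase_insert hk]
    have expand : ∀ i ∈ s, (a - 1) / (1 - u * x i) *
          ∏ l ∈ (insert k s).erase i, (x i - a * x l) / (x i - x l)
        = (1 - u * a * x k) / (1 - u * x k) * ((a - 1) / (1 - u * x i) *
            ∏ l ∈ s.erase i, (x i - a * x l) / (x i - x l))
          + (a - 1) / (1 - u * x k) * (((a - 1) * x k / (x k - x i)) *
            ∏ l ∈ s.erase i, (x i - a * x l) / (x i - x l)) := by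
      intro i hi
      have hik : i ≠ k := fun h => hk (h ▸ hi)
      rw [Finset.erase_insert_of_ne (Ne.symm hik),
        Finset.prod_insert (fun h => hk (Finset.mem_of_mem_erase h))]
      have hxik : x i - x k ≠ 0 := sub_ne_zero.mpr (hks i hi)
      have hxki : x k - x i ≠ 0 := sub_ne_zero.mpr fun h => hks i hi h.symm
      have hdi : 1 - u * x i ≠ 0 := hu' i hi
      have key : (a - 1) / (1 - u * x i) * ((x i - a * x k) / (x i - x k))
          = (1 - u * a * x k) / (1 - u * x k) * ((a - 1) / (1 - u * x i))
            + (a - 1) / (1 - u * x k) * ((a - 1) * x k / (x k - x i)) := by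
        field_simp
        ring
      calc (a - 1) / (1 - u * x i) * ((x i - a * x k) / (x i - x k) *
              ∏ l ∈ s.erase i, (x i - a * x l) / (x i - x l))
          = ((a - 1) / (1 - u * x i) * ((x i - a * x k) / (x i - x k))) *
              ∏ l ∈ s.erase i, (x i - a * x l) / (x i - x l) := by ring
        _ = _ := by rw [key]; ring
    rw [Finset.sum_congr rfl expand, Finset.sum_add_distrib, ← Finset.mul_sum, ← Finset.mul_sum,
      ← IH1, hsum]
    generalize ∏ l ∈ s, (x k - a * x l) / (x k - x l) = R
    generalize ∏ i ∈ s, (1 - u * a * x i) / (1 - u * x i) = P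
    field_simp
    ring


/-- the rational-function identity in `u` used in Proposition 5.2 of the paper. -/
theorem dell_identity_Vn {K : Type*} [Field K] (t : K) (ht : t ≠ 0)
    (m : ℤ) (N : ℕ) (hN : 1 ≤ N) (x : ℕ → K) (u : K)
    (hdist : ∀ i ∈ Finset.Icc 1 N, ∀ j ∈ Finset.Icc 1 N, i ≠ j → x i ≠ x j)
    (hu : ∀ i ∈ Finset.Icc 1 N, 1 - u * x i ≠ 0) :
    t ^ (m * (N : ℤ)) - ∏ i ∈ Finset.Icc 1 N, (1 - u * t ^ m * x i) / (1 - u * x i)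
      = ∑ i ∈ Finset.Icc 1 N, (t ^ m - 1) / (1 - u * x i) *
          ∏ l ∈ (Finset.Icc 1 N).erase i, (x i - t ^ m * x l) / (x i - x l) := by
  have hinj : Set.InjOn x ↑(Finset.Icc 1 N) := by
    intro i hi j hj hxij
    by_contra hne
    exact hdist i (by simpa using hi) j (by simpa using hj) hne hxij
  have h := dell_aux (t ^ m) x (Finset.Icc 1 N) hinj u hu
  rw [Nat.card_Icc] at h
  simpa [zpow_mul, zpow_natCast] using h
end

section
/- For the $N=2$ trigonometric Dell-Cherednik operators $P\theta_\omega(uC_1) = \sum_{n\in\mathbb{Z}} \omega^{(n^2-n)/2}(-u)^n \big(\frac{x_1 - t^n x_2}{x_1-x_2} + \frac{(t^n-1)x_2}{x_1-x_2}\sigma_{12}\big) q^{n x_1\partial_1}$ and $P\theta_\omega(uC_2) = \sum_{n\in\mathbb{Z}} \omega^{(n^2-n)/2}(-u)^n q^{n x_2\partial_2}\big(\frac{t^n x_1 - x_2}{x_1-x_2} + \frac{(1-t^n)x_2}{x_1-x_2}\sigma_{12}\big)$, their product restricted to symmetric functions equals $\sum_{n_1,n_2\in\mathbb{Z}} (-u)^{n_1+n_2}\omega^{(n_1^2-n_1)/2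 + (n_2^2-n_2)/2}\,\frac{t^{n_2}x_1 - t^{n_1}x_2}{x_1 - x_2}\, q^{n_1 x_1\partial_1} q^{n_2 x_2\partial_2}$, which is the $N=2$ Dell generating operator $D_2(u)$. -/
/-- GL(2) Dell–Cherednik product, Appendix A.1:
the product `Pθ_ω(uC₁)·Pθ_ω(uC₂)` restricted to symmetric functions equals
the `N = 2` Dell generating operator `D₂(u)`.  Coefficientwise this means:
for every pair of integers `(n₁,n₂)` (whose `ω`- and `u`-prefactors coincide
with those of `(n₂,n₁)`), the sum of the `(n₁,n₂)` and `(n₂,n₁)` terms of the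
product, applied to a symmetric function `f` at the point `(a,b)`, equals the
sum of the corresponding two terms of `D₂(u)` applied to `f` at `(a,b)`. -/
theorem dell_cherednik_gl2_trig {K : Type*} [Field K] (q t : K)
    (hq : q ≠ 0) (ht : t ≠ 0) (f : K → K → K)
    (hf : ∀ a b : K, f a b = f b a)
    (n₁ n₂ : ℤ) (a b : K) (hab : a ≠ b) :
    t ^ n₂ * ((a - t ^ n₁ * b) / (a - b)) * f (q ^ n₁ * a) (q ^ n₂ * b)
      + t ^ n₂ * ((t ^ n₁ - 1) * b / (a - b)) * f (q ^ n₁ * b) (q ^ n₂ * a)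
      + t ^ n₁ * ((a - t ^ n₂ * b) / (a - b)) * f (q ^ n₂ * a) (q ^ n₁ * b)
      + t ^ n₁ * ((t ^ n₂ - 1) * b / (a - b)) * f (q ^ n₂ * b) (q ^ n₁ * a)
    = ((t ^ n₂ * a - t ^ n₁ * b) / (a - b)) * f (q ^ n₁ * a) (q ^ n₂ * b)
      + ((t ^ n₁ * a - t ^ n₂ * b) / (a - b)) * f (q ^ n₂ * a) (q ^ n₁ * b) := by
  rw [hf (q ^ n₁ * b) (q ^ n₂ * a), hf (q ^ n₂ * b) (q ^ n₁ * a)]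
  have h : a - b ≠ 0 := sub_ne_zero.mpr hab
  field_simp
  ring
end
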